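/- Let A ∈ ℂ^{n×m} and 𝒜(X) = diag(A* X A). The operator norm of 𝒜 (from Hermitian matrices with Frobenius norm to ℝ^m with Euclidean norm) satisfies ‖𝒜‖ = √(‖A*A ∘ conj(A*A)‖₂), where ‖·‖₂ is the spectral norm. -/

import Mathlib

/-!
Write `𝒜 X = diag (Aᴴ X A)` (`diagOp`) and `𝒜* y = A diag(y) Aᴴ` (`diagOpAdjoint`), with Gram
matrix `G = Aᴴ A`. Then `Re tr ((𝒜* y)ᴴ X) = ⟪y, 𝒜 X⟫` and `𝒜 (𝒜* y) = R y`, where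
`R = G ∘ conj G = (|G i j|²)` (`schurGram`) is real. So `‖𝒜* y‖_F² = ⟪y, R y⟫`, and
Cauchy–Schwarz on either side gives `‖𝒜‖² = ‖R‖`, the norm of `R` on `ℝ^m`. Since `R` is real,
it acts separately on the real and imaginary parts of a vector in `ℂ^m`, so its norm on `ℂ^m`
is the same.
-/

open Matrix

noncomputable def frob {n : ℕ} (X : Matrix (Fin n) (Fin n) ℂ) : ℝ :=
  Real.sqrt ((Xᴴ * X).trace.re)

noncomputable def enorm {m : ℕ} (v : Fin m → ℝ) : ℝ :=
  Real.sqrt (∑ i, (v i) ^ 2)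

/-- Operator norm of `X ↦ diag(AᴴXA)` from Hermitian matrices (Frobenius norm)
to `ℝ^m` (Euclidean norm). -/
noncomputable def opNormA {n m : ℕ} (A : Matrix (Fin n) (Fin m) ℂ) : ℝ :=
  sSup {t : ℝ | ∃ X : Matrix (Fin n) (Fin n) ℂ, X.IsHermitian ∧ X ≠ 0 ∧
    t = _root_.enorm (fun i => ((Aᴴ * X * A) i i).re) / frob X}

lemma le_of_sq_le_mul {a b : ℝ} (hb : 0 ≤ b) (h : a ^ 2 ≤ a * b) : a ≤ b := by
  nlinarith

section Complexification

variable {ι : Type*} [Fintype ι]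

lemma EuclideanSpace.norm_sq_eq_re_add_im (z : EuclideanSpace ℂ ι) :
    ‖z‖ ^ 2 = ‖WithLp.toLp 2 (fun i => (z i).re)‖ ^ 2 + ‖WithLp.toLp 2 (fun i => (z i).im)‖ ^ 2 := by
  simp only [EuclideanSpace.norm_sq_eq, Real.norm_eq_abs, sq_abs, ← Finset.sum_add_distrib,
    Complex.sq_norm, Complex.normSq_apply]
  simp only [sq]

lemma Matrix.re_mulVec_map_ofReal (R : Matrix ι ι ℝ) (z : ι → ℂ) (i : ι) :
    ((R.map ((↑) : ℝ → ℂ) *ᵥ z) i).re = (R *ᵥ fun j => (z j).re) i := by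
  simp [Matrix.mulVec, dotProduct, Complex.re_sum]

lemma Matrix.im_mulVec_map_ofReal (R : Matrix ι ι ℝ) (z : ι → ℂ) (i : ι) :
    ((R.map ((↑) : ℝ → ℂ) *ᵥ z) i).im = (R *ᵥ fun j => (z j).im) i := by
  simp [Matrix.mulVec, dotProduct, Complex.im_sum]

variable [DecidableEq ι]

lemma Matrix.norm_sq_toEuclideanCLM_map_ofReal_apply (R : Matrix ι ι ℝ) (z : EuclideanSpace ℂ ι) :
    ‖toEuclideanCLM (𝕜 := ℂ) (R.map ((↑) : ℝ → ℂ)) z‖ ^ 2 =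
      ‖toEuclideanCLM (𝕜 := ℝ) R (WithLp.toLp 2 fun i => (z i).re)‖ ^ 2 +
        ‖toEuclideanCLM (𝕜 := ℝ) R (WithLp.toLp 2 fun i => (z i).im)‖ ^ 2 := by
  simp only [EuclideanSpace.norm_sq_eq_re_add_im, ofLp_toEuclideanCLM, re_mulVec_map_ofReal,
    im_mulVec_map_ofReal, toEuclideanCLM_toLp]

lemma Matrix.norm_toEuclideanCLM_map_ofReal (R : Matrix ι ι ℝ) :
    ‖toEuclideanCLM (𝕜 := ℂ) (R.map ((↑) : ℝ → ℂ))‖ = ‖toEuclideanCLM (𝕜 := ℝ) R‖ := by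
  set T := toEuclideanCLM (𝕜 := ℝ) R
  set Tℂ := toEuclideanCLM (𝕜 := ℂ) (R.map ((↑) : ℝ → ℂ))
  apply le_antisymm
  · refine Tℂ.opNorm_le_bound (norm_nonneg T) fun z => le_of_sq_le_sq ?_ (by positivity)
    rw [norm_sq_toEuclideanCLM_map_ofReal_apply, mul_pow, EuclideanSpace.norm_sq_eq_re_add_im]
    calc _ ≤ (‖T‖ * ‖(WithLp.toLp 2 fun i => (z i).re : EuclideanSpace ℝ ι)‖) ^ 2 +
          (‖T‖ * ‖(WithLp.toLp 2 fun i => (z i).im : EuclideanSpace ℝ ι)‖) ^ 2 := by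
          gcongr <;> exact T.le_opNorm _
      _ = _ := by ring
  · refine T.opNorm_le_bound (norm_nonneg Tℂ) fun u => ?_
    let z : EuclideanSpace ℂ ι := WithLp.toLp 2 fun i => (u i : ℂ)
    have hz : ‖z‖ = ‖u‖ := by simp only [z, EuclideanSpace.norm_eq, Complex.norm_real]
    have hTz : ‖Tℂ z‖ = ‖T u‖ := by
      rw [← sq_eq_sq₀ (norm_nonneg _) (norm_nonneg _), norm_sq_toEuclideanCLM_map_ofReal_apply]
      simp [z, T, ← Pi.zero_def]
    simpa [hz, hTz] using Tℂ.le_opNorm z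

end Complexification

section Frobenius

variable {n : ℕ}

lemma trace_conjTranspose_mul_eq_inner (Y X : Matrix (Fin n) (Fin n) ℂ) :
    (Yᴴ * X).trace = inner ℂ (WithLp.toLp 2 (Function.uncurry Y) : EuclideanSpace ℂ _)
      (WithLp.toLp 2 (Function.uncurry X)) := by
  rw [EuclideanSpace.inner_toLp_toLp, dotProduct, Fintype.sum_prod_type, Finset.sum_comm]
  simp [Matrix.trace, Matrix.mul_apply, mul_comm, Function.uncurry]

lemma frob_eq_norm (X : Matrix (Fin n) (Fin n) ℂ) :
    frob X = ‖(WithLp.toLp 2 (Function.uncurry X) : EuclideanSpace ℂ _)‖ := by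
  rw [frob, norm_eq_sqrt_re_inner (𝕜 := ℂ), trace_conjTranspose_mul_eq_inner]
  rfl

lemma frob_nonneg (X : Matrix (Fin n) (Fin n) ℂ) : 0 ≤ frob X := Real.sqrt_nonneg _

lemma frob_sq (X : Matrix (Fin n) (Fin n) ℂ) : frob X ^ 2 = (Xᴴ * X).trace.re := by
  rw [frob_eq_norm, ← inner_self_eq_norm_sq (𝕜 := ℂ), trace_conjTranspose_mul_eq_inner]
  rfl

lemma re_trace_conjTranspose_mul_le (Y X : Matrix (Fin n) (Fin n) ℂ) :
    (Yᴴ * X).trace.re ≤ frob Y * frob X := by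
  rw [trace_conjTranspose_mul_eq_inner, frob_eq_norm, frob_eq_norm]
  exact re_inner_le_norm (𝕜 := ℂ) _ _

end Frobenius

lemma Matrix.hadamard_self_map_conj {κ ι : Type*} (M : Matrix κ ι ℂ) :
    hadamard M (M.map (starRingEnd ℂ)) = (M.map Complex.normSq).map ((↑) : ℝ → ℂ) := by
  ext i j
  exact Complex.mul_conj (M i j)

section DiagOp

variable {κ ι : Type*} [Fintype ι] [DecidableEq ι]

def diagOpAdjoint (A : Matrix κ ι ℂ) (y : ι → ℝ) : Matrix κ κ ℂ :=
  A * diagonal (fun i => (y i : ℂ)) * Aᴴ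

lemma isHermitian_diagOpAdjoint (A : Matrix κ ι ℂ) (y : ι → ℝ) :
    (diagOpAdjoint A y).IsHermitian := by
  simp [diagOpAdjoint, IsHermitian, conjTranspose_mul, Matrix.mul_assoc, Pi.star_def]

variable [Fintype κ]

def diagOp (A : Matrix κ ι ℂ) (X : Matrix κ κ ℂ) : ι → ℝ :=
  fun i => ((Aᴴ * X * A) i i).re

def schurGram (A : Matrix κ ι ℂ) : Matrix ι ι ℝ :=
  (Aᴴ * A).map Complex.normSq

variable (A : Matrix κ ι ℂ)

lemma re_trace_diagOpAdjoint_mul (y : ι → ℝ) (X : Matrix κ κ ℂ) :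
    (diagOpAdjoint A y * X).trace.re = y ⬝ᵥ diagOp A X := by
  rw [diagOpAdjoint, Matrix.mul_assoc, trace_mul_cycle]
  simp [Matrix.trace, diagOp, dotProduct, Complex.re_sum, mul_comm]

lemma diagOp_diagOpAdjoint (y : ι → ℝ) : diagOp A (diagOpAdjoint A y) = schurGram A *ᵥ y := by
  ext i
  have hG : ∀ j, (Aᴴ * A) j i = starRingEnd ℂ ((Aᴴ * A) i j) := fun j =>
    ((isHermitian_conjTranspose_mul_self A).apply j i).symm
  have hgram : Aᴴ * diagOpAdjoint A y * A = Aᴴ * A * diagonal (fun j => (y j : ℂ)) * (Aᴴ * A) := by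
    simp only [diagOpAdjoint, Matrix.mul_assoc]
  rw [diagOp, hgram, mul_apply, Complex.re_sum]
  refine Finset.sum_congr rfl fun j _ => ?_
  rw [mul_diagonal, hG, mul_right_comm, Complex.mul_conj, ← Complex.ofReal_mul, Complex.ofReal_re]
  rfl

end DiagOp

section OperatorNorm

open scoped RealInnerProductSpace

variable {n m : ℕ} (A : Matrix (Fin n) (Fin m) ℂ)

lemma enorm_eq_norm_toLp (v : Fin m → ℝ) :
    _root_.enorm v = ‖(WithLp.toLp 2 v : EuclideanSpace ℝ (Fin m))‖ := by
  simp [_root_.enorm, EuclideanSpace.norm_eq]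

lemma frob_diagOpAdjoint_sq (y : Fin m → ℝ) :
    frob (diagOpAdjoint A y) ^ 2 = y ⬝ᵥ schurGram A *ᵥ y := by
  rw [frob_sq, (isHermitian_diagOpAdjoint A y).eq, re_trace_diagOpAdjoint_mul,
    diagOp_diagOpAdjoint]

lemma frob_diagOpAdjoint_le (y : Fin m → ℝ) :
    frob (diagOpAdjoint A y) ≤ √‖toEuclideanCLM (𝕜 := ℝ) (schurGram A)‖ * _root_.enorm y := by
  set T := toEuclideanCLM (𝕜 := ℝ) (schurGram A)
  set u : EuclideanSpace ℝ (Fin m) := WithLp.toLp 2 y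
  have hquad : frob (diagOpAdjoint A y) ^ 2 ≤ ‖T‖ * ‖u‖ ^ 2 :=
    calc frob (diagOpAdjoint A y) ^ 2 = ⟪u, T u⟫ := by
          rw [frob_diagOpAdjoint_sq, inner_toEuclideanCLM]
      _ ≤ ‖u‖ * ‖T u‖ := real_inner_le_norm _ _
      _ ≤ ‖u‖ * (‖T‖ * ‖u‖) := by gcongr; exact T.le_opNorm u
      _ = ‖T‖ * ‖u‖ ^ 2 := by ring
  rw [enorm_eq_norm_toLp]
  refine le_of_sq_le_sq ?_ (by positivity)
  rwa [mul_pow, Real.sq_sqrt (norm_nonneg T)]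

lemma enorm_diagOp_le (X : Matrix (Fin n) (Fin n) ℂ) :
    _root_.enorm (diagOp A X) ≤ √‖toEuclideanCLM (𝕜 := ℝ) (schurGram A)‖ * frob X := by
  set c := √‖toEuclideanCLM (𝕜 := ℝ) (schurGram A)‖
  set y := diagOp A X
  set M := diagOpAdjoint A y
  have hsq : _root_.enorm y ^ 2 ≤ _root_.enorm y * (c * frob X) :=
    calc _root_.enorm y ^ 2 = (Mᴴ * X).trace.re := by
          rw [(isHermitian_diagOpAdjoint A y).eq, re_trace_diagOpAdjoint_mul, enorm_eq_norm_toLp,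
            ← real_inner_self_eq_norm_sq, EuclideanSpace.inner_toLp_toLp, star_trivial]
      _ ≤ frob M * frob X := re_trace_conjTranspose_mul_le M X
      _ ≤ (c * _root_.enorm y) * frob X := by
          gcongr
          · exact frob_nonneg X
          · exact frob_diagOpAdjoint_le A y
      _ = _root_.enorm y * (c * frob X) := by ring
  exact le_of_sq_le_mul (mul_nonneg (Real.sqrt_nonneg _) (frob_nonneg X)) hsq

lemma opNormA_nonneg : 0 ≤ opNormA A :=
  Real.sSup_nonneg <| by
    rintro _ ⟨X, -, -, rfl⟩
    exact div_nonneg (Real.sqrt_nonneg _) (Real.sqrt_nonneg _)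

lemma opNormA_le {c : ℝ} (hc : 0 ≤ c)
    (hbound : ∀ X, X.IsHermitian → _root_.enorm (diagOp A X) ≤ c * frob X) : opNormA A ≤ c :=
  Real.sSup_le (by
    rintro _ ⟨X, hX, -, rfl⟩
    exact div_le_of_le_mul₀ (Real.sqrt_nonneg _) hc (hbound X hX)) hc

lemma enorm_diagOp_le_opNormA {c : ℝ} (hc : 0 ≤ c)
    (hbound : ∀ X, X.IsHermitian → _root_.enorm (diagOp A X) ≤ c * frob X)
    {X : Matrix (Fin n) (Fin n) ℂ} (hX : X.IsHermitian) :
    _root_.enorm (diagOp A X) ≤ opNormA A * frob X := by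
  rcases (frob_nonneg X).eq_or_lt with h0 | hpos
  · simpa [← h0] using hbound X hX
  · have hX0 : X ≠ 0 := by rintro rfl; simp [frob] at hpos
    rw [← div_le_iff₀ hpos]
    refine le_csSup ⟨c, ?_⟩ ⟨X, hX, hX0, rfl⟩
    rintro _ ⟨Y, hY, -, rfl⟩
    exact div_le_of_le_mul₀ (frob_nonneg Y) hc (hbound Y hY)

lemma norm_toEuclideanCLM_schurGram_le :
    ‖toEuclideanCLM (𝕜 := ℝ) (schurGram A)‖ ≤ opNormA A ^ 2 := by
  set T := toEuclideanCLM (𝕜 := ℝ) (schurGram A)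
  set s := opNormA A
  have hs : 0 ≤ s := opNormA_nonneg A
  refine T.opNorm_le_bound (by positivity) fun u => ?_
  set M := diagOpAdjoint A u.ofLp
  have hTu : ‖T u‖ = _root_.enorm (diagOp A M) := by
    rw [diagOp_diagOpAdjoint, enorm_eq_norm_toLp]
    rfl
  have hTu_le : ‖T u‖ ≤ s * frob M := hTu ▸
    enorm_diagOp_le_opNormA A (Real.sqrt_nonneg _) (fun Y _ => enorm_diagOp_le A Y)
      (isHermitian_diagOpAdjoint A _)
  have hM : frob M ≤ s * ‖u‖ := by
    have hsq : frob M ^ 2 ≤ frob M * (s * ‖u‖) :=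
      calc frob M ^ 2 = ⟪u, T u⟫ := by rw [frob_diagOpAdjoint_sq, inner_toEuclideanCLM]
        _ ≤ ‖u‖ * ‖T u‖ := real_inner_le_norm _ _
        _ ≤ ‖u‖ * (s * frob M) := by gcongr
        _ = frob M * (s * ‖u‖) := by ring
    exact le_of_sq_le_mul (by positivity) hsq
  calc ‖T u‖ ≤ s * frob M := hTu_le
    _ ≤ s * (s * ‖u‖) := by gcongr
    _ = s ^ 2 * ‖u‖ := by ring

end OperatorNorm

theorem stmt_8 {n m : ℕ} (A : Matrix (Fin n) (Fin m) ℂ) :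
    opNormA A =
      Real.sqrt ‖Matrix.toEuclideanCLM (𝕜 := ℂ)
        (Matrix.hadamard (Aᴴ * A) ((Aᴴ * A).map (starRingEnd ℂ)))‖ := by
  rw [hadamard_self_map_conj, norm_toEuclideanCLM_map_ofReal]
  apply le_antisymm
  · exact opNormA_le A (Real.sqrt_nonneg _) fun X _ => enorm_diagOp_le A X
  · exact (Real.sqrt_le_left (opNormA_nonneg A)).2 (norm_toEuclideanCLM_schurGram_le A)
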